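/- arXiv:math/0408188 — 4 statements merged into one kernel-verified Lean document; each statement's English description precedes it below -/
import Mathlib

section
/- Let V be an R-module with decomposition V = H ⊕ K, let π : V → H be the projection, and let D̄ : V → V satisfy D̄² = 0 and suppose K is a D̄-invariant acyclic subcomplex (i.e., D̄(K) ⊆ K and the complex (K, D̄|_K) is exact). Define d_H = π ∘ D̄ restricted to H (viewing H ⊆ V). Then d_H ∘ d_H = 0 and π induces an isomorphism from the homology of (V, D̄) to the homology of (H, d_H). -/
/-!
Since `K` is a `D̄`-stable subcomplex and `π` kills exactly `K`, `π ∘ D̄ ∘ (1 - π) = 0`, so `π`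
is a chain map and `d_H² = π D̄ π D̄ = π D̄² = 0`. Acyclicity of `K` then corrects cycles and
boundaries by elements of `K`: a `d_H`-cycle `h` has `D̄ h ∈ K` a `D̄`-cycle, hence `D̄ h = D̄ k`
and `h - k` is a `D̄`-cycle over `h`; a `D̄`-cycle `v` with `π v = π D̄ h` differs from `D̄ h` by a
cycle in `K`, hence by a boundary.
-/

section HirschBrown

variable {R V : Type*} [Ring R] [AddCommGroup V] [Module R V]
  {K : Submodule R V} {π D : Module.End R V}

lemma apply_apply_eq_zero_of_mul_self_eq_zero (hD2 : D * D = 0) (v : V) : D (D v) = 0 := by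
  simpa using DFunLike.congr_fun hD2 v

lemma mem_of_proj_eq_zero (hπcompl : ∀ v : V, v - π v ∈ K) {x : V} (hx : π x = 0) : x ∈ K := by
  simpa [hx] using hπcompl x

lemma proj_diff_eq_proj_diff_proj (hπK : ∀ k ∈ K, π k = 0) (hπcompl : ∀ v : V, v - π v ∈ K)
    (hDK : ∀ k ∈ K, D k ∈ K) (v : V) : π (D v) = π (D (π v)) := by
  have h := hπK _ (hDK _ (hπcompl v))
  rwa [map_sub, map_sub, sub_eq_zero] at h

lemma proj_diff_proj_diff_eq_zero (hπK : ∀ k ∈ K, π k = 0) (hπcompl : ∀ v : V, v - π v ∈ K)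
    (hDK : ∀ k ∈ K, D k ∈ K) (hD2 : D * D = 0) (v : V) : π (D (π (D v))) = 0 := by
  rw [← proj_diff_eq_proj_diff_proj hπK hπcompl hDK, apply_apply_eq_zero_of_mul_self_eq_zero hD2,
    map_zero]

lemma exists_cycle_of_proj_diff_eq_zero {H : Submodule R V} (hπH : ∀ h ∈ H, π h = h)
    (hπK : ∀ k ∈ K, π k = 0) (hπcompl : ∀ v : V, v - π v ∈ K) (hD2 : D * D = 0)
    (hKacyclic : ∀ k ∈ K, D k = 0 → ∃ k' ∈ K, D k' = k) {h : V} (hh : h ∈ H)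
    (hdh : π (D h) = 0) : ∃ v : V, D v = 0 ∧ π v = h := by
  obtain ⟨k, hk, hDk⟩ := hKacyclic _ (mem_of_proj_eq_zero hπcompl hdh)
    (apply_apply_eq_zero_of_mul_self_eq_zero hD2 h)
  refine ⟨h - k, by rw [map_sub, hDk, sub_self], ?_⟩
  rw [map_sub, hπH h hh, hπK k hk, sub_zero]

lemma exists_diff_eq_of_proj_eq_proj_diff (hπcompl : ∀ v : V, v - π v ∈ K) (hD2 : D * D = 0)
    (hKacyclic : ∀ k ∈ K, D k = 0 → ∃ k' ∈ K, D k' = k) {v h : V} (hv : D v = 0)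
    (hvh : π v = π (D h)) : ∃ w : V, D w = v := by
  have hmem : v - D h ∈ K := mem_of_proj_eq_zero hπcompl (by rw [map_sub, hvh, sub_self])
  have hcycle : D (v - D h) = 0 := by
    rw [map_sub, hv, apply_apply_eq_zero_of_mul_self_eq_zero hD2, sub_zero]
  obtain ⟨k, -, hDk⟩ := hKacyclic _ hmem hcycle
  exact ⟨h + k, by rw [map_add, hDk, add_sub_cancel]⟩

end HirschBrown

theorem stmt4_general {R V : Type*} [CommRing R] [AddCommGroup V] [Module R V]
    (H K : Submodule R V)
    (π : Module.End R V)
    (hπH : ∀ h ∈ H, π h = h) (hπK : ∀ k ∈ K, π k = 0)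
    (hπcompl : ∀ v : V, v - π v ∈ K)
    (Dbar : Module.End R V) (hD2 : Dbar * Dbar = 0)
    (hDK : ∀ k ∈ K, Dbar k ∈ K)
    (hKacyclic : ∀ k ∈ K, Dbar k = 0 → ∃ k' ∈ K, Dbar k' = k) :
    -- the Hirsch--Brown differential `d_H = π ∘ D̄ |_H` squares to zero
    (∀ h ∈ H, π (Dbar (π (Dbar h))) = 0) ∧
    -- `π` is a chain map from `(V, D̄)` to `(H, d_H)`
    (∀ v : V, π (Dbar v) = π (Dbar (π v))) ∧
    -- `π` is surjective on homology
    (∀ h ∈ H, π (Dbar h) = 0 → ∃ v : V, Dbar v = 0 ∧ ∃ h' ∈ H, π v - h = π (Dbar h')) ∧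
    -- `π` is injective on homology
    (∀ v : V, Dbar v = 0 → (∃ h ∈ H, π v = π (Dbar h)) → ∃ w : V, Dbar w = v) := by
  refine ⟨fun h _ => proj_diff_proj_diff_eq_zero hπK hπcompl hDK hD2 h,
    proj_diff_eq_proj_diff_proj hπK hπcompl hDK, ?_, ?_⟩
  · intro h hh hdh
    obtain ⟨v, hv, hπv⟩ := exists_cycle_of_proj_diff_eq_zero hπH hπK hπcompl hD2 hKacyclic hh hdh
    exact ⟨v, hv, 0, H.zero_mem, by rw [hπv, sub_self, map_zero, map_zero]⟩
  · rintro v hv ⟨h, -, hvh⟩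
    exact exists_diff_eq_of_proj_eq_proj_diff hπcompl hD2 hKacyclic hv hvh

/-- If `V = H ⊕ K`, `π` the projection onto `H` along `K`, `D̄² = 0`,
`K` a `D̄`-invariant acyclic subcomplex, and `d_H = π ∘ D̄` on `H`, then `d_H² = 0`
and `π` induces an isomorphism from the homology of `(V, D̄)` to that of `(H, d_H)`. -/
theorem stmt4 {R V : Type*} [CommRing R] [AddCommGroup V] [Module R V]
    (H K : Submodule R V)
    (hsum : H ⊔ K = ⊤) (hdisj : H ⊓ K = ⊥)
    (π : Module.End R V)
    (hπH : ∀ h ∈ H, π h = h) (hπK : ∀ k ∈ K, π k = 0)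
    (hπrange : ∀ v : V, π v ∈ H) (hπcompl : ∀ v : V, v - π v ∈ K)
    (Dbar : Module.End R V) (hD2 : Dbar * Dbar = 0)
    (hDK : ∀ k ∈ K, Dbar k ∈ K)
    (hKacyclic : ∀ k ∈ K, Dbar k = 0 → ∃ k' ∈ K, Dbar k' = k) :
    -- the Hirsch--Brown differential `d_H = π ∘ D̄ |_H` squares to zero
    (∀ h ∈ H, π (Dbar (π (Dbar h))) = 0) ∧
    -- `π` is a chain map from `(V, D̄)` to `(H, d_H)`
    (∀ v : V, π (Dbar v) = π (Dbar (π v))) ∧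
    -- `π` is surjective on homology
    (∀ h ∈ H, π (Dbar h) = 0 → ∃ v : V, Dbar v = 0 ∧ ∃ h' ∈ H, π v - h = π (Dbar h')) ∧
    -- `π` is injective on homology
    (∀ v : V, Dbar v = 0 → (∃ h ∈ H, π v = π (Dbar h)) → ∃ w : V, Dbar w = v) :=
  stmt4_general H K π hπH hπK hπcompl Dbar hD2 hDK hKacyclic
end

section
/- Under the Hodge-identity hypotheses of the previous context (I = H + ΔG with Δ = dd* + d*d, H annihilating and annihilated by d and d*, G commuting with d and d*), with ∂ linear, ∂² = 0, d∂ = −∂d, P = d*G∂ locally nilpotent, φ = I − P, and d_G = d − ∂: for every a ∈ V with d(a) = 0 and d*(a) = 0 (i.e., a harmonic), one has H ∘ ψ⁻¹ ∘ d_G ∘ ψ (a) = φ ∘ d_G ∘ φ⁻¹ (a), where Q = ∂d*G, ψ = I − Q. Equivalently, the Hirsch–Brown differential on harmonic elements satisfies d_HB = (I−P) d_G (I−P)⁻¹. -/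
/-!
On a harmonic element `a` we have `ψ a = a` and `d a = 0`, so `d_G ψ a = -∂ a`; since
`ψ ∂ = ∂ φ`, the left side is `-H ∂ φ⁻¹ a`. On the other side, `P ∂ = 0` and the commutator
`[d, P] = Δ G ∂` turn `φ d_G` into `d φ - H ∂` (using `H = I - Δ G`), and `d φ φ⁻¹ a = d a = 0`.
-/

section Ring

variable {A : Type*} [Ring A]

theorem one_sub_mul_sub_eq_mul_one_sub_sub {d ds G H del : A}
    (hHodge : 1 = H + (d * ds + ds * d) * G) (hdG : d * G = G * d)
    (hdel2 : del * del = 0) (hanti : d * del = -(del * d)) :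
    (1 - ds * G * del) * (d - del) = d * (1 - ds * G * del) - H * del := by
  have hcomm : d * (ds * G * del) - ds * G * del * d = (d * ds + ds * d) * G * del :=
    calc d * (ds * G * del) - ds * G * del * d
        = d * ds * G * del - ds * G * (del * d) := by noncomm_ring
      _ = d * ds * G * del + ds * (d * G) * del := by
          rw [← neg_neg (del * d), ← hanti, hdG]; noncomm_ring
      _ = (d * ds + ds * d) * G * del := by noncomm_ring
  have hPdel : ds * G * del * del = 0 := by rw [mul_assoc, hdel2, mul_zero]
  have hH : H = 1 - (d * ds + ds * d) * G := eq_sub_of_add_eq hHodge.symm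
  calc (1 - ds * G * del) * (d - del)
      = d * (1 - ds * G * del) + (d * (ds * G * del) - ds * G * del * d) - del
          + ds * G * del * del := by noncomm_ring
    _ = d * (1 - ds * G * del) - H * del := by rw [hcomm, hPdel, hH]; noncomm_ring

end Ring

theorem mul_eq_mul_of_leftInverse_of_rightInverse {M : Type*} [Monoid M] {a a' b b' x : M}
    (ha : a' * a = 1) (hb : b * b' = 1) (h : a * x = x * b) : a' * x = x * b' :=
  calc a' * x = a' * (x * b) * b' := by rw [mul_assoc, mul_assoc, hb, mul_one]
    _ = x * b' := by rw [← h, ← mul_assoc, ha, one_mul]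

theorem stmt7_general {R V : Type*} [CommRing R] [AddCommGroup V] [Module R V]
    (d ds G H del : Module.End R V)
    (hHodge : (1 : Module.End R V) = H + (d * ds + ds * d) * G)
    (hdG : d * G = G * d) (hdsG : ds * G = G * ds)
    (hdel2 : del * del = 0) (hanti : d * del = -(del * d))
    (P Q : Module.End R V)
    (hP : P = ds * G * del) (hQ : Q = del * (ds * G))
    (φinv ψinv : Module.End R V)
    (hφ₂ : (1 - P) * φinv = 1)
    (hψ₁ : ψinv * (1 - Q) = 1)
    (dG : Module.End R V) (hdGdef : dG = d - del) :
    ∀ a : V, d a = 0 → ds a = 0 →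
      H (ψinv (dG ((1 - Q) a))) = (1 - P) (dG (φinv a)) := by
  intro a hda hdsa
  have hQa : Q a = 0 := by
    rw [hQ, Module.End.mul_apply, hdsG, Module.End.mul_apply, hdsa, map_zero, map_zero]
  have hψdel : ψinv * del = del * φinv :=
    mul_eq_mul_of_leftInverse_of_rightInverse hψ₁ hφ₂ (by rw [hQ, hP]; noncomm_ring)
  have hφdG : (1 - P) * dG = d * (1 - P) - H * del := by
    rw [hP, hdGdef]; exact one_sub_mul_sub_eq_mul_one_sub_sub hHodge hdG hdel2 hanti
  calc H (ψinv (dG ((1 - Q) a))) = -H ((ψinv * del) a) := by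
        simp [hdGdef, hQa, hda]
    _ = d (((1 - P) * φinv) a) - H (del (φinv a)) := by simp [hψdel, hφ₂, hda]
    _ = (1 - P) (dG (φinv a)) := by
        simpa only [Module.End.mul_apply, LinearMap.sub_apply] using
          (LinearMap.congr_fun hφdG (φinv a)).symm

/-- Theorem (3.8): under the Hodge identities, on harmonic elements
`a` one has `H ψ⁻¹ d_G ψ (a) = (I-P) d_G (I-P)⁻¹ (a)`. -/
theorem stmt7 {R V : Type*} [CommRing R] [AddCommGroup V] [Module R V]
    (d ds G H del : Module.End R V)
    (hHodge : (1 : Module.End R V) = H + (d * ds + ds * d) * G)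
    (hdG : d * G = G * d) (hdsG : ds * G = G * ds)
    (hdH : d * H = 0) (hHd : H * d = 0)
    (hdsH : ds * H = 0) (hHds : H * ds = 0)
    (hd2 : d * d = 0) (hds2 : ds * ds = 0)
    (hdel2 : del * del = 0) (hanti : d * del = -(del * d))
    (P Q : Module.End R V)
    (hP : P = ds * G * del) (hQ : Q = del * (ds * G))
    (hPnil : ∀ v : V, ∃ n : ℕ, (P ^ n) v = 0)
    (hQnil : ∀ v : V, ∃ n : ℕ, (Q ^ n) v = 0)
    (φinv ψinv : Module.End R V)
    (hφ₁ : φinv * (1 - P) = 1) (hφ₂ : (1 - P) * φinv = 1)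
    (hψ₁ : ψinv * (1 - Q) = 1) (hψ₂ : (1 - Q) * ψinv = 1)
    (dG : Module.End R V) (hdGdef : dG = d - del) :
    ∀ a : V, d a = 0 → ds a = 0 →
      H (ψinv (dG ((1 - Q) a))) = (1 - P) (dG (φinv a)) :=
  stmt7_general d ds G H del hHodge hdG hdsG hdel2 hanti P Q hP hQ φinv ψinv hφ₂ hψ₁ dG hdGdef
end

section
/- Under the Hodge-identity hypotheses (I = H + ΔG, Δ = dd* + d*d, G commuting with d and d*, H d = d H = 0 = H d* = d* H, d² = (d*)² = 0), with ∂ linear, ∂² = 0, d∂ = −∂d, P = d*G∂ locally nilpotent, φ = I−P, d_G = d−∂: for every α ∈ V, (I−P) d_G (I−P)⁻¹(α) = H d_G (I−P)⁻¹(α) + d(α). -/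
/-!
Write `P = d* G ∂`. Commuting `d` past `P` with `dG = Gd` and `d∂ = -∂d` gives `[d, P] = ΔG∂ = ∂ - H∂`,
while `P∂ = 0` because `∂² = 0`. Together with `Hd = 0` this yields the operator identity
`(I - P) d_G = H d_G + d (I - P)`, and composing on the right with `(I - P)⁻¹` gives the claim.
-/

section HodgeIdentity

variable {A : Type*} [Ring A]

theorem mul_sub_mul_eq_laplacian_mul (d ds G del : A) (hdG : d * G = G * d)
    (hanti : d * del = -(del * d)) :
    d * (ds * G * del) - ds * G * del * d = (d * ds + ds * d) * G * del := by
  have hdeld : del * d = -(d * del) := by rw [hanti, neg_neg]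
  calc d * (ds * G * del) - ds * G * del * d
      = d * ds * G * del + ds * (G * (d * del)) := by rw [mul_assoc _ del, hdeld]; noncomm_ring
    _ = (d * ds + ds * d) * G * del := by rw [← mul_assoc G, ← hdG]; noncomm_ring

theorem one_sub_mul_sub_eq (d H del P : A) (hHd : H * d = 0)
    (hcomm : d * P - P * d = (1 - H) * del) (hPdel : P * del = 0) :
    (1 - P) * (d - del) = H * (d - del) + d * (1 - P) := by
  calc (1 - P) * (d - del)
      = d - del - P * d + P * del := by noncomm_ring
    _ = H * d - H * del + d + (d * P - P * d) - (1 - H) * del + P * del - d * P := by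
        rw [hHd]; noncomm_ring
    _ = H * (d - del) + d * (1 - P) := by rw [hcomm, hPdel]; noncomm_ring

end HodgeIdentity

theorem stmt12_general {R V : Type*} [CommRing R] [AddCommGroup V] [Module R V]
    (d ds G H del : Module.End R V)
    (hHodge : (1 : Module.End R V) = H + (d * ds + ds * d) * G)
    (hdG : d * G = G * d)
    (hHd : H * d = 0)
    (hdel2 : del * del = 0) (hanti : d * del = -(del * d))
    (P : Module.End R V) (hP : P = ds * G * del)
    (φinv : Module.End R V)
    (hφ₂ : (1 - P) * φinv = 1)
    (dG : Module.End R V) (hdGdef : dG = d - del) :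
    ∀ α : V, (1 - P) (dG (φinv α)) = H (dG (φinv α)) + d α := by
  intro α
  have hcomm : d * P - P * d = (1 - H) * del := by
    rw [hP, mul_sub_mul_eq_laplacian_mul d ds G del hdG hanti, hHodge, add_sub_cancel_left]
  have hPdel : P * del = 0 := by rw [hP, mul_assoc, hdel2, mul_zero]
  have key : (1 - P) * dG * φinv = H * dG * φinv + d := by
    rw [hdGdef, one_sub_mul_sub_eq d H del P hHd hcomm hPdel, add_mul, mul_assoc d, hφ₂, mul_one]
  simpa only [Module.End.mul_apply, LinearMap.add_apply] using DFunLike.congr_fun key α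

/-- Remark (3.14)(3): for every `α`,
`(I-P) d_G (I-P)⁻¹ α = H d_G (I-P)⁻¹ α + d α`. -/
theorem stmt12 {R V : Type*} [CommRing R] [AddCommGroup V] [Module R V]
    (d ds G H del : Module.End R V)
    (hHodge : (1 : Module.End R V) = H + (d * ds + ds * d) * G)
    (hdG : d * G = G * d) (hdsG : ds * G = G * ds)
    (hdH : d * H = 0) (hHd : H * d = 0)
    (hdsH : ds * H = 0) (hHds : H * ds = 0)
    (hd2 : d * d = 0) (hds2 : ds * ds = 0)
    (hdel2 : del * del = 0) (hanti : d * del = -(del * d))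
    (P : Module.End R V) (hP : P = ds * G * del)
    (hPnil : ∀ v : V, ∃ n : ℕ, (P ^ n) v = 0)
    (φinv : Module.End R V)
    (hφ₁ : φinv * (1 - P) = 1) (hφ₂ : (1 - P) * φinv = 1)
    (dG : Module.End R V) (hdGdef : dG = d - del) :
    ∀ α : V, (1 - P) (dG (φinv α)) = H (dG (φinv α)) + d α :=
  stmt12_general d ds G H del hHodge hdG hHd hdel2 hanti P hP φinv hφ₂ dG hdGdef
end

section
/- Let V be an R-module with operators as in the Hirsch–Brown setup: H, P, Q : V → V with HP = 0, Q ∘ i_H = 0 on a subspace W ⊆ V with H|_W = id and H(V) = W, and P, Q locally nilpotent with PQ = QP = 0. Define θ = H ∘ (I−Q)⁻¹ and ĝ = (I−P)⁻¹ ∘ i_W. Then θ ∘ ĝ = id_W. -/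
/-! Since `(1 - P) φ⁻¹ = 1`, we have `φ⁻¹ w = w + P (φ⁻¹ w)`. Both summands are fixed by `ψ⁻¹`,
because `Q` kills `W` and `Q P = 0`; then `H` fixes `w` and kills the image of `P`. -/

namespace Module.End

variable {R V : Type*} [Semiring R] [AddCommGroup V] [Module R V]

theorem apply_eq_self_of_mul_one_sub_eq_one {ψ Q : Module.End R V} (h : ψ * (1 - Q) = 1)
    {v : V} (hv : Q v = 0) : ψ v = v := by
  simpa [hv] using LinearMap.congr_fun h v

theorem apply_eq_add_of_one_sub_mul_eq_one {φ P : Module.End R V} (h : (1 - P) * φ = 1)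
    (v : V) : φ v = v + P (φ v) := by
  rw [← sub_eq_iff_eq_add]
  simpa using LinearMap.congr_fun h v

end Module.End

open Module.End in
theorem stmt17_general {R V : Type*} [CommRing R] [AddCommGroup V] [Module R V]
    (P Q H : Module.End R V) (W : Submodule R V)
    (hHP : H * P = 0)
    (hQW : ∀ w ∈ W, Q w = 0)
    (hHW : ∀ w ∈ W, H w = w)
    (hQP : Q * P = 0)
    (φinv ψinv : Module.End R V)
    (hφ₂ : (1 - P) * φinv = 1)
    (hψ₁ : ψinv * (1 - Q) = 1) :
    ∀ w ∈ W, H (ψinv (φinv w)) = w := by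
  intro w hw
  have hψP (v : V) : ψinv (P v) = P v :=
    apply_eq_self_of_mul_one_sub_eq_one hψ₁ (LinearMap.congr_fun hQP v)
  calc H (ψinv (φinv w)) = H (ψinv (w + P (φinv w))) := by
        rw [← apply_eq_add_of_one_sub_mul_eq_one hφ₂]
    _ = H (w + P (φinv w)) := by
        rw [map_add, apply_eq_self_of_mul_one_sub_eq_one hψ₁ (hQW w hw), hψP]
    _ = w := by
        rw [map_add, hHW w hw, ← mul_apply H P, hHP, LinearMap.zero_apply, add_zero]

/-- Corollary (3.9), final assertion: `H (I-Q)⁻¹ (I-P)⁻¹` restricts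
to the identity on the subspace `W` of harmonics. -/
theorem stmt17 {R V : Type*} [CommRing R] [AddCommGroup V] [Module R V]
    (P Q H : Module.End R V) (W : Submodule R V)
    (hHP : H * P = 0)
    (hQW : ∀ w ∈ W, Q w = 0)
    (hHW : ∀ w ∈ W, H w = w)
    (hHrange : LinearMap.range H = W)
    (hPnil : ∀ v : V, ∃ n : ℕ, (P ^ n) v = 0)
    (hQnil : ∀ v : V, ∃ n : ℕ, (Q ^ n) v = 0)
    (hPQ : P * Q = 0) (hQP : Q * P = 0)
    (φinv ψinv : Module.End R V)
    (hφ₁ : φinv * (1 - P) = 1) (hφ₂ : (1 - P) * φinv = 1)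
    (hψ₁ : ψinv * (1 - Q) = 1) (hψ₂ : (1 - Q) * ψinv = 1) :
    ∀ w ∈ W, H (ψinv (φinv w)) = w :=
  stmt17_general P Q H W hHP hQW hHW hQP φinv ψinv hφ₂ hψ₁
end
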